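/- Coercivity of the relative energy in the far field of densities: let 1 < γ ≤ 2, a > 0, P(ρ) = (a/(γ−1))ρ^γ, and fix ρ̄ > 0. There exists a constant c > 0 (depending on a, γ, ρ̄) such that for all real numbers ρ ≥ ρ̄ and ρ̃ with 0 ≤ ρ̃ ≤ ρ̄/2, one has P(ρ) − P'(ρ̃)(ρ − ρ̃) − P(ρ̃) ≥ c ρ^γ, where P'(ρ̃) = (aγ/(γ−1)) ρ̃^{γ−1}. -/

import Mathlib

open Real

/-- Tangent line bound from below for convex rpow: for `1 ≤ p`, `0 < s`, `0 ≤ t`,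
`s^p + p s^(p-1) (t - s) ≤ t^p`. -/
lemma rpow_tangent_le {s t p : ℝ} (hs : 0 < s) (ht : 0 ≤ t) (hp : 1 ≤ p) :
    s ^ p + p * s ^ (p - 1) * (t - s) ≤ t ^ p := by
  have hx : (-1 : ℝ) ≤ t / s - 1 := by
    have : 0 ≤ t / s := div_nonneg ht hs.le
    linarith
  have h := one_add_mul_self_le_rpow_one_add hx hp
  rw [add_sub_cancel] at h
  have hts : (t / s) ^ p = t ^ p / s ^ p := Real.div_rpow ht hs.le p
  rw [hts] at h
  have hsp : 0 < s ^ p := rpow_pos_of_pos hs p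
  have hsp1 : s ^ (p - 1) = s ^ p / s := by
    rw [eq_div_iff hs.ne']
    nth_rewrite 2 [← Real.rpow_one s]
    rw [← Real.rpow_add hs]
    norm_num
  have h2 : (1 + p * (t / s - 1)) * s ^ p ≤ t ^ p := by
    calc (1 + p * (t / s - 1)) * s ^ p ≤ (t ^ p / s ^ p) * s ^ p := by
          exact mul_le_mul_of_nonneg_right h hsp.le
      _ = t ^ p := by field_simp
  calc s ^ p + p * s ^ (p - 1) * (t - s)
      = (1 + p * (t / s - 1)) * s ^ p := by
        rw [hsp1]; field_simp
    _ ≤ t ^ p := h2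

/-- Tangent line bound from above for concave rpow: for `0 ≤ q ≤ 1`, `0 < s`, `0 ≤ t`,
`s * t^q ≤ s * s^q + q * s^q * (t - s)`. -/
lemma rpow_tangent_ge {s t q : ℝ} (hs : 0 < s) (ht : 0 ≤ t) (hq0 : 0 ≤ q) (hq1 : q ≤ 1) :
    s * t ^ q ≤ s * s ^ q + q * s ^ q * (t - s) := by
  have hx : (-1 : ℝ) ≤ t / s - 1 := by
    have : 0 ≤ t / s := div_nonneg ht hs.le
    linarith
  have h := rpow_one_add_le_one_add_mul_self hx hq0 hq1
  rw [add_sub_cancel] at h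
  have hts : (t / s) ^ q = t ^ q / s ^ q := Real.div_rpow ht hs.le q
  rw [hts] at h
  have hsq : 0 < s ^ q := rpow_pos_of_pos hs q
  have h2 : t ^ q ≤ (1 + q * (t / s - 1)) * s ^ q := by
    calc t ^ q = (t ^ q / s ^ q) * s ^ q := by field_simp
      _ ≤ (1 + q * (t / s - 1)) * s ^ q := mul_le_mul_of_nonneg_right h hsq.le
  have h3 : s * t ^ q ≤ s * ((1 + q * (t / s - 1)) * s ^ q) :=
    mul_le_mul_of_nonneg_left h2 hs.le
  calc s * t ^ q ≤ s * ((1 + q * (t / s - 1)) * s ^ q) := h3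
    _ = s * s ^ q + q * s ^ q * (t - s) := by field_simp

/-- Coercivity of the relative energy in the far field of densities: for `1 < γ ≤ 2`, `a > 0`
and `ρ̄ > 0` there is `c > 0` such that for all `ρ ≥ ρ̄` and `0 ≤ ρ̃ ≤ ρ̄/2`,
`P(ρ) - P'(ρ̃)(ρ - ρ̃) - P(ρ̃) ≥ c ρ^γ`, where `P(r) = (a/(γ-1)) r^γ`. -/
theorem relative_energy_farfield_coercivity (a γ ρbar : ℝ) (ha : 0 < a) (hγ1 : 1 < γ)
    (hγ2 : γ ≤ 2) (hρbar : 0 < ρbar) :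
    ∃ c : ℝ, 0 < c ∧ ∀ ρ ρt : ℝ, ρbar ≤ ρ → 0 ≤ ρt → ρt ≤ ρbar / 2 →
      c * ρ ^ γ ≤
        a / (γ - 1) * ρ ^ γ - a * γ / (γ - 1) * ρt ^ (γ - 1) * (ρ - ρt)
          - a / (γ - 1) * ρt ^ γ := by
  have hγ0 : 0 < γ - 1 := by linarith
  set P : ℝ := (2 : ℝ) ^ γ with hPdef
  have hP0 : 0 < P := rpow_pos_of_pos two_pos γ
  have hP : γ + 1 < P := by
    have := one_add_mul_self_lt_rpow_one_add (by norm_num : (-1:ℝ) ≤ 1)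
      (by norm_num : (1:ℝ) ≠ 0) hγ1
    norm_num at this
    rw [hPdef]
    linarith
  refine ⟨a / (γ - 1) * (1 - (γ + 1) / P), ?_, ?_⟩
  · apply mul_pos (div_pos ha hγ0)
    rw [sub_pos, div_lt_one hP0]
    exact hP
  intro ρ t hρ ht0 ht
  have hρ0 : 0 < ρ := lt_of_lt_of_le hρbar hρ
  set s : ℝ := ρ / 2 with hsdef
  have hs0 : 0 < s := by positivity
  have hts : t ≤ s := le_trans ht (by rw [hsdef]; linarith)
  -- abbreviations
  set B : ℝ := s ^ (γ - 1) with hBdef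
  set U : ℝ := t ^ (γ - 1) with hUdef
  have hB0 : 0 < B := rpow_pos_of_pos hs0 _
  have hU0 : 0 ≤ U := rpow_nonneg ht0 _
  have hA : s ^ γ = s * B := by
    have h := Real.rpow_add hs0 1 (γ - 1)
    rw [show (1:ℝ) + (γ - 1) = γ by ring, Real.rpow_one] at h
    rw [hBdef, h]
  have hT : t ^ γ = t * U := by
    have : t ^ ((1 : ℝ) + (γ - 1)) = t ^ (1:ℝ) * t ^ (γ - 1) :=
      Real.rpow_add' ht0 (by intro h; rw [show (1:ℝ) + (γ-1) = γ by ring] at h; linarith)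
    rw [show γ = (1:ℝ) + (γ - 1) by ring, this, Real.rpow_one, hUdef]
  have hρs : ρ ^ γ = P * (s * B) := by
    have : ρ = 2 * s := by rw [hsdef]; ring
    rw [this, Real.mul_rpow (by norm_num) hs0.le, hA]
  -- key Bernoulli bounds
  have hkeyA : s ^ γ + γ * B * (t - s) ≤ t ^ γ := by
    have := rpow_tangent_le hs0 ht0 hγ1.le
    rwa [← hBdef] at this
  have hkeyB : s * U ≤ s * B + (γ - 1) * B * (t - s) := by
    have := rpow_tangent_ge hs0 ht0 hγ0.le (by linarith : γ - 1 ≤ 1)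
    rwa [← hBdef, ← hUdef] at this
  rw [hA, hT] at hkeyA
  -- the central polynomial inequality: γ U (ρ - t) + t U ≤ (γ+1) s B
  have hcenter : γ * U * (2 * s - t) + t * U ≤ (γ + 1) * (s * B) := by
    nlinarith [mul_le_mul_of_nonneg_left hkeyB (by linarith : (0:ℝ) ≤ 2 * γ),
      mul_nonneg (mul_nonneg (mul_nonneg hγ0.le (by linarith : (0:ℝ) ≤ γ)) hB0.le)
        (by linarith : (0:ℝ) ≤ s - t)]
  -- conclude
  rw [hρs, hT]
  have hρ2s : ρ = 2 * s := by rw [hsdef]; ring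
  rw [hρ2s]
  have hk : 0 < a / (γ - 1) := div_pos ha hγ0
  have hq : (γ + 1) / P * P = γ + 1 := div_mul_cancel₀ _ hP0.ne'
  have hgoal : (γ + 1) * (s * B) - γ * U * (2 * s - t) - t * U ≥ 0 := by linarith
  have expand : a / (γ - 1) * (P * (s * B)) - a * γ / (γ - 1) * U * (2 * s - t)
      - a / (γ - 1) * (t * U) - a / (γ - 1) * (1 - (γ + 1) / P) * (P * (s * B))
      = a / (γ - 1) * ((γ + 1) * (s * B) - γ * U * (2 * s - t) - t * U) := by
    field_simp
    ring
  nlinarith [mul_nonneg hk.le hgoal, expand]
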